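/- The cubic polynomial 17x^3 - 924x^2y - 153xy^2 - 996y^3 + 1164x^2z + 544xyz + 6516y^2z - 544xz^2 - 7680yz^2 is irreducible over the field of complex numbers. -/

import Mathlib

/-!
Viewed as a cubic in `x` over `ℂ[y, z]`, `C3` has the unit leading coefficient `17`, so a
factorization would give a root `r ∈ ℂ[y, z]` of `17 r³ + c₂ r² + c₁ r + c₀`, where `cᵢ` is
homogeneous of degree `3 - i`. Comparing total degrees forces `r` to be affine, and evaluating at
the origin kills its constant term. Hence `C3` would vanish on a plane `x = α y + β z`, and the four
resulting coefficient equations in `α, β` have no common solution.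
-/

open MvPolynomial

/-- The cubic C3 ∈ ℂ[x,y,z]. -/
noncomputable def C3 : MvPolynomial (Fin 3) ℂ :=
  17 * X 0 ^ 3 - 924 * X 0 ^ 2 * X 1 - 153 * X 0 * X 1 ^ 2 - 996 * X 1 ^ 3
    + 1164 * X 0 ^ 2 * X 2 + 544 * X 0 * X 1 * X 2 + 6516 * X 1 ^ 2 * X 2
    - 544 * X 0 * X 2 ^ 2 - 7680 * X 1 * X 2 ^ 2

namespace Polynomial

theorem irreducible_cubic_of_forall_ne_zero {R : Type*} [CommRing R] [IsDomain R] {a b c d : R}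
    (ha : IsUnit a) (h : ∀ r, a * r ^ 3 + b * r ^ 2 + c * r + d ≠ 0) :
    Irreducible (C a * X ^ 3 + C b * X ^ 2 + C c * X + C d) := by
  obtain ⟨u, rfl⟩ := ha
  set q := X ^ 3 + C (u⁻¹ * b) * X ^ 2 + C (u⁻¹ * c) * X + C (u⁻¹ * d) with hq_def
  have hq : q.Monic := by rw [hq_def]; monicity!
  have hdeg : q.natDegree = 3 := by rw [hq_def]; compute_degree!
  have hfac : C (u : R) * X ^ 3 + C b * X ^ 2 + C c * X + C d = C (u : R) * q := by
    simp only [q, mul_add, ← mul_assoc, ← C_mul, Units.mul_inv, one_mul]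
  rw [hfac, irreducible_isUnit_mul (isUnit_C.mpr u.isUnit),
    hq.irreducible_iff_roots_eq_zero_of_degree_le_three (by omega) (by omega)]
  refine Multiset.eq_zero_of_forall_notMem fun r hr => h r ?_
  rw [mem_roots hq.ne_zero, IsRoot.def] at hr
  simp only [q, eval_add, eval_mul, eval_pow, eval_C, eval_X] at hr
  linear_combination ↑u * hr - (b * r ^ 2 + c * r + d) * u.mul_inv

end Polynomial

namespace MvPolynomial

variable {σ R : Type*}

theorem exists_eq_C_add_sum_smul_X_of_totalDegree_le_one [CommSemiring R] [Fintype σ]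
    {f : MvPolynomial σ R} (hf : f.totalDegree ≤ 1) :
    ∃ (a : R) (c : σ → R), f = C a + ∑ i, c i • X i := by
  have hsplit : f = homogeneousComponent 0 f + homogeneousComponent 1 f := by
    conv_lhs => rw [← sum_homogeneousComponent f]
    interval_cases h : f.totalDegree
    · simp [homogeneousComponent_eq_zero 1 f (by omega)]
    · simp [Finset.sum_range_succ]
  have h1 : homogeneousComponent 1 f ∈ Submodule.span R (Set.range X) :=
    homogeneousSubmodule_one_eq_span_X (σ := σ) (R := R) ▸ homogeneousComponent_mem 1 f
  obtain ⟨c, hc⟩ := Submodule.mem_span_range_iff_exists_fun R |>.mp h1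
  exact ⟨coeff 0 f, c, hsplit.trans (by rw [homogeneousComponent_zero, hc])⟩

theorem totalDegree_le_one_of_cubic_eq_zero [CommRing R] [IsDomain R]
    {a b c d r : MvPolynomial σ R} (ha : a ≠ 0) (hb : b.totalDegree ≤ 1)
    (hc : c.totalDegree ≤ 2) (hd : d.totalDegree ≤ 3) (h : a * r ^ 3 + b * r ^ 2 + c * r + d = 0) :
    r.totalDegree ≤ 1 := by
  by_contra! hr
  have hr0 : r ≠ 0 := by rintro rfl; simp at hr
  have hlhs : 3 * r.totalDegree ≤ (a * r ^ 3).totalDegree := by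
    rw [totalDegree_mul_of_isDomain ha (pow_ne_zero 3 hr0), pow_succ, pow_two,
      totalDegree_mul_of_isDomain (mul_ne_zero hr0 hr0) hr0, totalDegree_mul_of_isDomain hr0 hr0]
    omega
  have hrhs : (a * r ^ 3).totalDegree < 3 * r.totalDegree := by
    rw [show a * r ^ 3 = -(b * r ^ 2 + c * r + d) by linear_combination h, totalDegree_neg]
    have hbr := (totalDegree_mul b (r ^ 2)).trans (add_le_add hb (totalDegree_pow r 2))
    have hcr := (totalDegree_mul c r).trans (add_le_add hc le_rfl)
    refine (totalDegree_add _ _).trans_lt (max_lt ((totalDegree_add _ _).trans_lt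
      (max_lt (by omega) (by omega))) (by omega))
  omega

end MvPolynomial

namespace C3

noncomputable def c₂ : MvPolynomial (Fin 2) ℂ := C (-924) * X 0 + C 1164 * X 1
noncomputable def c₁ : MvPolynomial (Fin 2) ℂ :=
  C (-153) * X 0 ^ 2 + C 544 * (X 0 * X 1) + C (-544) * X 1 ^ 2
noncomputable def c₀ : MvPolynomial (Fin 2) ℂ :=
  C (-996) * X 0 ^ 3 + C 6516 * (X 0 ^ 2 * X 1) + C (-7680) * (X 0 * X 1 ^ 2)

theorem finSuccEquiv_eq : finSuccEquiv ℂ 2 C3 =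
    .C 17 * .X ^ 3 + .C c₂ * .X ^ 2 + .C c₁ * .X + .C c₀ := by
  have h1 : (X 1 : MvPolynomial (Fin 3) ℂ) = X (Fin.succ 0) := rfl
  have h2 : (X 2 : MvPolynomial (Fin 3) ℂ) = X (Fin.succ 1) := rfl
  simp only [C3, c₂, c₁, c₀, h1, h2, map_add, map_sub, map_mul, map_pow, map_ofNat, map_neg,
    finSuccEquiv_X_zero, finSuccEquiv_X_succ]
  ring

theorem isHomogeneous_c₂ : c₂.IsHomogeneous 1 :=
  (isHomogeneous_C_mul_X _ 0).add (isHomogeneous_C_mul_X _ 1)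

theorem isHomogeneous_c₁ : c₁.IsHomogeneous 2 :=
  ((isHomogeneous_C_mul_X_pow _ 0 2).add
    (((isHomogeneous_X ℂ 0).mul (isHomogeneous_X ℂ 1)).C_mul _)).add
    (isHomogeneous_C_mul_X_pow _ 1 2)

theorem isHomogeneous_c₀ : c₀.IsHomogeneous 3 :=
  ((isHomogeneous_C_mul_X_pow _ 0 3).add
    (((isHomogeneous_X_pow 0 2).mul (isHomogeneous_X ℂ 1)).C_mul _)).add
    (((isHomogeneous_X ℂ 0).mul (isHomogeneous_X_pow 1 2)).C_mul _)

/-- The `eᵢ` are the coefficients of `C3 (α y + β z, y, z)`; the multipliers in the certificate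
were found by solving a linear system over `ℚ`. -/
theorem linear_root_equations_inconsistent (α β : ℂ)
    (e₃ : 17 * α ^ 3 - 924 * α ^ 2 - 153 * α - 996 = 0)
    (e₂ : 51 * α ^ 2 * β + 1164 * α ^ 2 - 1848 * α * β + 544 * α - 153 * β + 6516 = 0)
    (e₁ : 51 * α * β ^ 2 + 2328 * α * β - 924 * β ^ 2 - 544 * α + 544 * β - 7680 = 0)
    (e₀ : 17 * β ^ 3 + 1164 * β ^ 2 - 544 * β = 0) : False := by
  refine one_ne_zero (α := ℂ) ?_
  linear_combination
    ((-40108899404091760191495317 / 26102622714033648945393209514 : ℂ)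
      + (-2127012053504644703960407 / 34803496952044865260524279352 : ℂ) * β
      + (-7996570954485597965295 / 2870391501199576516331899328 : ℂ) * β ^ 2
      + (-7335704978070518848709 / 89699734412486766135371854 : ℂ) * α
      + (-124706984627198820428053 / 34803496952044865260524279352 : ℂ) * α * β) * e₃
    + ((-21186345905507240605116987 / 17401748476022432630262139676 : ℂ)
      + (-13423936809593597306877 / 358798937649947064541487416 : ℂ) * β
      + (-4400104928403743087283 / 5740783002399153032663798656 : ℂ) * β ^ 2
      + (-1911615104679597992792 / 44849867206243383067685927 : ℂ) * α
      + (16262825340573722121 / 358798937649947064541487416 : ℂ) * α * β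
      + (124706984627198820428053 / 104410490856134595781572838056 : ℂ) * α ^ 2) * e₂
    + ((-2766745472336569665937533 / 2870391501199576516331899328 : ℂ)
      + (-19929887028652248101223 / 1435195750599788258165949664 : ℂ) * β
      + (-18525174049631354591139 / 1435195750599788258165949664 : ℂ) * α
      + (4400104928403743087283 / 5740783002399153032663798656 : ℂ) * α * β
      + (2535421048770609544797 / 2870391501199576516331899328 : ℂ) * α ^ 2) * e₁
    + (-4372592853643793039674971 / 5740783002399153032663798656 : ℂ) * e₀

theorem cubic_ne_zero (r : MvPolynomial (Fin 2) ℂ) :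
    17 * r ^ 3 + c₂ * r ^ 2 + c₁ * r + c₀ ≠ 0 := by
  intro h
  obtain ⟨γ, c, rfl⟩ := exists_eq_C_add_sum_smul_X_of_totalDegree_le_one <|
    totalDegree_le_one_of_cubic_eq_zero (by norm_num) isHomogeneous_c₂.totalDegree_le
      isHomogeneous_c₁.totalDegree_le isHomogeneous_c₀.totalDegree_le h
  have key (y z : ℂ) : 17 * (γ + c 0 * y + c 1 * z) ^ 3
      + (-924 * y + 1164 * z) * (γ + c 0 * y + c 1 * z) ^ 2
      + (-153 * y ^ 2 + 544 * y * z - 544 * z ^ 2) * (γ + c 0 * y + c 1 * z)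
      + (-996 * y ^ 3 + 6516 * y ^ 2 * z - 7680 * y * z ^ 2) = 0 := by
    have := congrArg (MvPolynomial.eval ![y, z]) h
    simp only [c₂, c₁, c₀, Fin.sum_univ_two, map_add, map_mul, map_pow, map_ofNat, map_zero,
      eval_C, smul_eval, eval_X, Matrix.cons_val_zero, Matrix.cons_val_one] at this
    linear_combination this
  obtain rfl : γ = 0 := by simpa using key 0 0
  exact linear_root_equations_inconsistent (c 0) (c 1) (by linear_combination key 1 0)
    (by linear_combination (key 1 1 - key 1 (-1)) / 2 - key 0 1)
    (by linear_combination (key 1 1 + key 1 (-1)) / 2 - key 1 0) (by linear_combination key 0 1)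

end C3

theorem stmt2 : Irreducible C3 := by
  rw [← MulEquiv.irreducible_iff (finSuccEquiv ℂ 2), C3.finSuccEquiv_eq]
  refine Polynomial.irreducible_cubic_of_forall_ne_zero ?_ C3.cubic_ne_zero
  exact (isUnit_iff_ne_zero.mpr (by norm_num : (17 : ℂ) ≠ 0)).map MvPolynomial.C
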